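/- The ratio Z₁(n)/Z(n) for f = w1^2 w2^2 satisfies lim_{n→∞} log(n)·(Z₁(n)/Z(n)) = √(2π); in particular Z₁(n)/Z(n) → 0 like 1/log n. -/

import Mathlib

open Real MeasureTheory Filter

/-- Partition function for `f(w1,w2) = w1^2 w2^2`. -/
noncomputable def Za (n : ℝ) : ℝ :=
  ∫ w1 : ℝ, ∫ w2 : ℝ,
    Real.exp (-(n * (w1 ^ 2 * w2 ^ 2))) *
      (1 / (2 * π) * Real.exp (-(w1 ^ 2 + w2 ^ 2) / 2))

/-- Weighted partition function with weight `|w1|` for `f(w1,w2) = w1^2 w2^2`. -/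
noncomputable def Z1a (n : ℝ) : ℝ :=
  ∫ w1 : ℝ, ∫ w2 : ℝ,
    |w1| * Real.exp (-(n * (w1 ^ 2 * w2 ^ 2))) *
      (1 / (2 * π) * Real.exp (-(w1 ^ 2 + w2 ^ 2) / 2))

/-!
Integrating out `w2` is a Gaussian integral, which leaves one-dimensional integrals against the
kernel `t / √(1 + (t w)²)` with `t = √(2n)`: `Za n · √(2π) = marginalZ t` and
`Z1a n · √(2π) = marginalZ1 t`. Multiplied by `|w|` the kernel tends to `1` boundedly, so
`t · marginalZ1 t → ∫ exp (-w²/2) = √(2π)` by dominated convergence. Over `[-1, 1]` the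
kernel integrates to `2 arsinh t`, and outside it is at most `1`, so
`t · marginalZ t = 2 log t + O(1) = log n + O(1)`.
-/

open Topology Asymptotics

section Kernel

variable {t : ℝ}

lemma continuous_div_sqrt_one_add_sq (t : ℝ) :
    Continuous fun w : ℝ => t / √(1 + (t * w) ^ 2) :=
  continuous_const.div (by fun_prop) fun w => by positivity

lemma abs_mul_div_sqrt_one_add_sq_le_one (ht : 0 ≤ t) (w : ℝ) :
    |w| * (t / √(1 + (t * w) ^ 2)) ≤ 1 := by
  have habs : |w| * t = |t * w| := by rw [abs_mul, abs_of_nonneg ht, mul_comm]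
  rw [← mul_div_assoc, div_le_one (by positivity), habs]
  exact abs_le_sqrt (by linarith)

lemma div_sqrt_one_add_sq_le_one (ht : 0 ≤ t) {w : ℝ} (hw : 1 ≤ |w|) :
    t / √(1 + (t * w) ^ 2) ≤ 1 :=
  (le_mul_of_one_le_left (by positivity) hw).trans (abs_mul_div_sqrt_one_add_sq_le_one ht w)

lemma tendsto_div_sqrt_one_add_sq : Tendsto (fun x : ℝ => x / √(1 + x ^ 2)) atTop (𝓝 1) := by
  have hinv : Tendsto (fun x : ℝ => (1 + x ^ 2)⁻¹) atTop (𝓝 0) :=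
    (tendsto_atTop_add_const_left _ 1 (tendsto_pow_atTop two_ne_zero)).inv_tendsto_atTop
  have := (tendsto_const_nhds (x := (1 : ℝ))).sub hinv |>.sqrt
  rw [sub_zero, Real.sqrt_one] at this
  refine this.congr' ?_
  filter_upwards [eventually_ge_atTop 0] with x hx
  have hfrac : 1 - (1 + x ^ 2)⁻¹ = x ^ 2 / (1 + x ^ 2) := by field_simp; ring
  rw [hfrac, Real.sqrt_div (sq_nonneg x), Real.sqrt_sq hx]

lemma integral_div_sqrt_one_add_sq (t : ℝ) :
    ∫ w in (-1)..1, t / √(1 + (t * w) ^ 2) = 2 * arsinh t := by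
  have hderiv (w : ℝ) : HasDerivAt (fun w => arsinh (t * w)) (t / √(1 + (t * w) ^ 2)) w := by
    simpa [div_eq_inv_mul] using ((hasDerivAt_id w).const_mul t).arsinh
  rw [intervalIntegral.integral_eq_sub_of_hasDerivAt (fun w _ => hderiv w)
    ((continuous_div_sqrt_one_add_sq t).intervalIntegrable _ _)]
  simp only [mul_one, mul_neg, arsinh_neg]
  ring

end Kernel

lemma integrable_exp_neg_sq_div_two : Integrable fun w : ℝ => exp (-w ^ 2 / 2) := by
  simpa [neg_div, div_eq_inv_mul] using integrable_exp_neg_mul_sq (inv_pos.2 two_pos)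

lemma integral_exp_neg_sq_div_two : ∫ w : ℝ, exp (-w ^ 2 / 2) = √(2 * π) := by
  simpa [neg_div, div_eq_inv_mul] using integral_gaussian 2⁻¹

lemma integral_exp_mul_gaussian_density {n : ℝ} (hn : 0 ≤ n) (x : ℝ) :
    ∫ y : ℝ, exp (-(n * (x ^ 2 * y ^ 2))) * (1 / (2 * π) * exp (-(x ^ 2 + y ^ 2) / 2)) =
      exp (-x ^ 2 / 2) / √(1 + (√(2 * n) * x) ^ 2) / √(2 * π) := by
  have hb : 0 < 1 + 2 * n * x ^ 2 := by positivity
  calc _ = ∫ y : ℝ, exp (-x ^ 2 / 2) / (2 * π) * exp (-((1 + 2 * n * x ^ 2) / 2) * y ^ 2) := by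
        congr 1 with y
        rw [mul_left_comm, ← exp_add, div_mul_eq_mul_div, one_mul, div_mul_eq_mul_div,
          ← exp_add]
        ring_nf
    _ = exp (-x ^ 2 / 2) / (2 * π) * √(π / ((1 + 2 * n * x ^ 2) / 2)) := by
        rw [integral_const_mul, integral_gaussian]
    _ = _ := by
        rw [mul_pow, sq_sqrt (by positivity), div_div_eq_mul_div, sqrt_div' _ hb.le,
          mul_comm π]
        field_simp
        rw [sq_sqrt (by positivity)]

noncomputable def marginalZ (t : ℝ) : ℝ := ∫ w : ℝ, exp (-w ^ 2 / 2) / √(1 + (t * w) ^ 2)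

noncomputable def marginalZ1 (t : ℝ) : ℝ :=
  ∫ w : ℝ, |w| * (exp (-w ^ 2 / 2) / √(1 + (t * w) ^ 2))

lemma Za_eq {n : ℝ} (hn : 0 ≤ n) : Za n = marginalZ √(2 * n) / √(2 * π) := by
  simp_rw [Za, integral_exp_mul_gaussian_density hn, integral_div, marginalZ]

lemma Z1a_eq {n : ℝ} (hn : 0 ≤ n) : Z1a n = marginalZ1 √(2 * n) / √(2 * π) := by
  simp_rw [Z1a, mul_assoc, integral_const_mul, integral_exp_mul_gaussian_density hn]
  simp_rw [marginalZ1, ← integral_div, mul_div_assoc]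

lemma tendsto_integral_abs_mul_div_sqrt_one_add_sq {g : ℝ → ℝ} (hg : Integrable g) :
    Tendsto (fun t => ∫ w, |w| * (t / √(1 + (t * w) ^ 2)) * g w) atTop (𝓝 (∫ w, g w)) := by
  refine tendsto_integral_filter_of_dominated_convergence (fun w => ‖g w‖) ?_ ?_ hg.norm ?_
  · exact .of_forall fun t => ((continuous_abs.mul
      (continuous_div_sqrt_one_add_sq t)).aestronglyMeasurable.mul hg.aestronglyMeasurable)
  · filter_upwards [eventually_ge_atTop 0] with t ht
    refine .of_forall fun w => ?_
    rw [norm_mul, Real.norm_of_nonneg (by positivity)]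
    exact mul_le_of_le_one_left (norm_nonneg _) (abs_mul_div_sqrt_one_add_sq_le_one ht w)
  · filter_upwards [Measure.ae_ne volume 0] with w hw
    have hkernel : Tendsto (fun t => |w| * (t / √(1 + (t * w) ^ 2))) atTop (𝓝 1) := by
      refine (tendsto_div_sqrt_one_add_sq.comp
        (tendsto_id.atTop_mul_const (abs_pos.2 hw))).congr fun t => ?_
      simp only [Function.comp_apply, id, mul_pow, sq_abs]
      ring
    simpa using hkernel.mul_const (g w)

lemma tendsto_mul_marginalZ1 : Tendsto (fun t => t * marginalZ1 t) atTop (𝓝 √(2 * π)) := by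
  rw [← integral_exp_neg_sq_div_two]
  refine (tendsto_integral_abs_mul_div_sqrt_one_add_sq
    integrable_exp_neg_sq_div_two).congr fun t => ?_
  rw [marginalZ1, ← integral_const_mul]
  congr 1 with w
  ring

section MarginalZBounds

open Set

variable {t : ℝ}

lemma mul_marginalZ (t : ℝ) :
    t * marginalZ t = ∫ w : ℝ, exp (-w ^ 2 / 2) * (t / √(1 + (t * w) ^ 2)) := by
  rw [marginalZ, ← integral_const_mul]
  congr 1 with w
  ring

lemma integrable_exp_mul_div_sqrt_one_add_sq (t : ℝ) :
    Integrable fun w : ℝ => exp (-w ^ 2 / 2) * (t / √(1 + (t * w) ^ 2)) := by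
  refine integrable_exp_neg_sq_div_two.mul_bdd (c := |t|)
    (continuous_div_sqrt_one_add_sq t).aestronglyMeasurable (.of_forall fun w => ?_)
  rw [norm_div, Real.norm_of_nonneg (sqrt_nonneg _)]
  exact div_le_self (norm_nonneg t) (one_le_sqrt.2 (by nlinarith))

lemma mul_marginalZ_le (ht : 0 ≤ t) : t * marginalZ t ≤ 2 * arsinh t + √(2 * π) := by
  have hq : IntegrableOn (fun w : ℝ => t / √(1 + (t * w) ^ 2)) (Ioc (-1) 1) :=
    (continuous_div_sqrt_one_add_sq t).integrableOn_Ioc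
  rw [mul_marginalZ, ← integral_div_sqrt_one_add_sq, ← integral_exp_neg_sq_div_two,
    intervalIntegral.integral_of_le (by norm_num), ← integral_indicator measurableSet_Ioc,
    ← integral_add (hq.integrable_indicator measurableSet_Ioc) integrable_exp_neg_sq_div_two]
  refine integral_mono (integrable_exp_mul_div_sqrt_one_add_sq t)
    ((hq.integrable_indicator measurableSet_Ioc).add integrable_exp_neg_sq_div_two) fun w => ?_
  have hexp_pos := exp_pos (-w ^ 2 / 2)
  by_cases hw : w ∈ Ioc (-1) 1
  · have hexp_le : exp (-w ^ 2 / 2) ≤ 1 := exp_le_one_iff.2 (by nlinarith)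
    have hq_nonneg : 0 ≤ t / √(1 + (t * w) ^ 2) := by positivity
    rw [indicator_of_mem hw]
    nlinarith
  · have hw_abs : 1 ≤ |w| := by
      rw [mem_Ioc, not_and_or, not_lt, not_le] at hw
      exact le_abs'.2 (hw.imp id le_of_lt)
    rw [indicator_of_notMem hw, zero_add]
    exact mul_le_of_le_one_right hexp_pos.le (div_sqrt_one_add_sq_le_one ht hw_abs)

lemma le_mul_marginalZ (ht : 0 ≤ t) : 2 * arsinh t - 1 ≤ t * marginalZ t := by
  have hq := (continuous_div_sqrt_one_add_sq t).intervalIntegrable (μ := volume) (-1) 1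
  calc 2 * arsinh t - 1 = ∫ w in (-1)..1, (t / √(1 + (t * w) ^ 2) - 1 / 2) := by
        rw [intervalIntegral.integral_sub hq intervalIntegrable_const,
          integral_div_sqrt_one_add_sq, intervalIntegral.integral_const]
        norm_num
    _ ≤ ∫ w in (-1)..1, exp (-w ^ 2 / 2) * (t / √(1 + (t * w) ^ 2)) := by
        refine intervalIntegral.integral_mono_on (by norm_num) (hq.sub intervalIntegrable_const)
          (integrable_exp_mul_div_sqrt_one_add_sq t).intervalIntegrable fun w hw => ?_
        have hexp : 1 - w ^ 2 / 2 ≤ exp (-w ^ 2 / 2) := by linarith [add_one_le_exp (-w ^ 2 / 2)]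
        have hq_nonneg : 0 ≤ t / √(1 + (t * w) ^ 2) := by positivity
        have hsq : w ^ 2 * (t / √(1 + (t * w) ^ 2)) ≤ 1 := by
          rw [← sq_abs, sq, mul_assoc]
          exact mul_le_one₀ (abs_le.2 hw) (by positivity)
            (abs_mul_div_sqrt_one_add_sq_le_one ht w)
        nlinarith [mul_le_mul_of_nonneg_right hexp hq_nonneg]
    _ ≤ t * marginalZ t := by
        rw [intervalIntegral.integral_of_le (by norm_num), mul_marginalZ]
        exact setIntegral_le_integral (integrable_exp_mul_div_sqrt_one_add_sq t)
          (.of_forall fun w => by positivity)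

end MarginalZBounds

lemma isEquivalent_of_sub_isBigO_one {α : Type*} {l : Filter α} {u v : α → ℝ}
    (huv : (u - v) =O[l] (fun _ => (1 : ℝ))) (hv : Tendsto v l atTop) : u ~[l] v :=
  huv.trans_isLittleO ((isLittleO_one_left_iff ℝ).2 (tendsto_norm_atTop_atTop.comp hv))

lemma isBigO_arsinh_sub_log : (fun x => arsinh x - log x) =O[atTop] (fun _ => (1 : ℝ)) := by
  refine (isBoundedUnder_of_eventually_le (a := log 3) ?_).isBigO_one ℝ
  filter_upwards [eventually_ge_atTop 1] with x hx
  have hsqrt : √(1 + x ^ 2) ≤ 2 * x := sqrt_le_iff.2 ⟨by linarith, by nlinarith⟩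
  have hlower : log x ≤ arsinh x :=
    log_le_log (by linarith) (by linarith [sqrt_nonneg (1 + x ^ 2)])
  have hupper : arsinh x ≤ log 3 + log x := by
    rw [← log_mul (by norm_num) (by linarith)]
    exact log_le_log (by positivity) (by linarith)
  rw [Real.norm_eq_abs, abs_le]
  constructor <;> linarith [log_nonneg (by norm_num : (1 : ℝ) ≤ 3)]

lemma isBigO_mul_marginalZ_sub_two_arsinh :
    (fun t => t * marginalZ t - 2 * arsinh t) =O[atTop] (fun _ => (1 : ℝ)) := by
  refine (isBoundedUnder_of_eventually_le (a := √(2 * π) + 1) ?_).isBigO_one ℝ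
  filter_upwards [eventually_ge_atTop 0] with t ht
  rw [Real.norm_eq_abs, abs_le]
  constructor <;> linarith [le_mul_marginalZ ht, mul_marginalZ_le ht, sqrt_nonneg (2 * π)]

lemma isEquivalent_mul_marginalZ : (fun t => t * marginalZ t) ~[atTop] (fun t => 2 * log t) := by
  refine isEquivalent_of_sub_isBigO_one ?_ (tendsto_log_atTop.const_mul_atTop two_pos)
  refine (isBigO_mul_marginalZ_sub_two_arsinh.add
    (isBigO_arsinh_sub_log.const_mul_left 2)).congr_left fun t => ?_
  simp only [Pi.sub_apply]
  ring

lemma tendsto_sqrt_two_mul_atTop : Tendsto (fun n : ℝ => √(2 * n)) atTop atTop :=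
  tendsto_sqrt_atTop.comp (tendsto_id.const_mul_atTop two_pos)

lemma isEquivalent_sqrt_two_mul_mul_marginalZ :
    (fun n => √(2 * n) * marginalZ √(2 * n)) ~[atTop] log := by
  refine (isEquivalent_mul_marginalZ.comp_tendsto tendsto_sqrt_two_mul_atTop).trans
    (isEquivalent_of_sub_isBigO_one ?_ tendsto_log_atTop)
  refine (isBigO_const_const (log 2) one_ne_zero atTop).congr' ?_ .rfl
  filter_upwards [eventually_gt_atTop 0] with n hn
  rw [Pi.sub_apply, Function.comp_apply, log_sqrt (by positivity), log_mul two_ne_zero hn.ne']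
  ring

/-- `log n · (Z₁(n)/Z(n)) → √(2π)` as `n → ∞`; in particular `Z₁(n)/Z(n) → 0`. -/
theorem ratio_Z1a_Za :
    Tendsto (fun n : ℝ => Real.log n * (Z1a n / Za n)) atTop
      (nhds (Real.sqrt (2 * π))) ∧
    Tendsto (fun n : ℝ => Z1a n / Za n) atTop (nhds 0) := by
  have hZ1 : Tendsto (fun n : ℝ => √(2 * n) * marginalZ1 √(2 * n)) atTop (𝓝 √(2 * π)) :=
    tendsto_mul_marginalZ1.comp tendsto_sqrt_two_mul_atTop
  have hZ : Tendsto (fun n : ℝ => √(2 * n) * marginalZ √(2 * n) / log n) atTop (𝓝 1) :=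
    (isEquivalent_iff_tendsto_one ((eventually_gt_atTop 1).mono fun n hn => (log_pos hn).ne')).1
      isEquivalent_sqrt_two_mul_mul_marginalZ
  have hmain : Tendsto (fun n : ℝ => log n * (Z1a n / Za n)) atTop (𝓝 √(2 * π)) := by
    have hratio := hZ1.div hZ one_ne_zero
    rw [div_one] at hratio
    refine hratio.congr' ?_
    filter_upwards [eventually_gt_atTop 0] with n hn
    rw [Pi.div_apply, Za_eq hn.le, Z1a_eq hn.le, div_div_div_cancel_right₀ (by positivity),
      div_div_eq_mul_div, mul_assoc, mul_div_mul_left _ _ (by positivity)]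
    ring
  refine ⟨hmain, (hmain.div_atTop tendsto_log_atTop).congr' ?_⟩
  filter_upwards [eventually_gt_atTop 1] with n hn
  exact mul_div_cancel_left₀ _ (log_pos hn).ne'
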